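/- For every n ≥ 1 and d ∈ ℤ, the Laurent polynomial κ̃_{n,d} = ((w_1 - 1)^d + … + (w_n - 1)^d) · ∏_{e=1}^{g} ∏_{1 ≤ a, b ≤ n} (w_a q / (w_b t_e) - 1) satisfies the multiplicative wheel conditions (for d ≥ 0 this is a genuine polynomial in w_1,…,w_n). -/

import Mathlib

open MvPolynomial

noncomputable section

set_option synthInstance.maxHeartbeats 1000000
set_option maxHeartbeats 1000000

/-- The field `F̃ = ℚ(q, t_1, …, t_g)`. -/
abbrev Ft (g : ℕ) : Type := FractionRing (MvPolynomial (Fin (g+1)) ℚ)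

def qq (g : ℕ) : Ft g := algebraMap (MvPolynomial (Fin (g+1)) ℚ) (Ft g) (X 0)
def tt (g : ℕ) (e : Fin g) : Ft g := algebraMap (MvPolynomial (Fin (g+1)) ℚ) (Ft g) (X e.succ)

/-- The field of rational functions in `w_1, …, w_n` over `F̃`. -/
abbrev Kt (g n : ℕ) : Type := FractionRing (MvPolynomial (Fin n) (Ft g))

def ι (g n : ℕ) : MvPolynomial (Fin n) (Ft g) →+* Kt g n := algebraMap _ _
def ww (g n : ℕ) (a : Fin n) : Kt g n := ι g n (X a)
def cc (g n : ℕ) (r : Ft g) : Kt g n := ι g n (C r)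

/-- `κ̃_{n,d}` as an element of the rational function field. -/
def kappaT (g n : ℕ) (d : ℤ) : Kt g n :=
  (∑ a : Fin n, (ww g n a - 1) ^ d) *
    ∏ e : Fin g, ∏ a : Fin n, ∏ b : Fin n,
      (ww g n a * cc g n (qq g) / (ww g n b * cc g n (tt g e)) - 1)

/-- The multiplicative wheel conditions on a polynomial in `w_1, …, w_n`. -/
def MultWheel (g n : ℕ) (N : MvPolynomial (Fin n) (Ft g)) : Prop :=
  ∀ e : Fin g, ∀ a b c : Fin n, a ≠ b → b ≠ c → a ≠ c →
    (aeval (fun v : Fin n =>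
        if v = b then X a * C (tt g e)
        else if v = c then X a * C (qq g)
        else (X v : MvPolynomial (Fin n) (Ft g))) N = 0) ∧
    (aeval (fun v : Fin n =>
        if v = b then X a * C (qq g / tt g e)
        else if v = c then X a * C (qq g)
        else (X v : MvPolynomial (Fin n) (Ft g))) N = 0)

/-! ### Auxiliary lemmas -/

lemma iota_inj (g n : ℕ) : Function.Injective (ι g n) :=
  IsFractionRing.injective (MvPolynomial (Fin n) (Ft g)) (Kt g n)

lemma qq_ne_zero (g : ℕ) : qq g ≠ 0 :=
  (map_ne_zero_iff _ (IsFractionRing.injective (MvPolynomial (Fin (g+1)) ℚ) (Ft g))).mpr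
    (X_ne_zero _)

lemma tt_ne_zero (g : ℕ) (e : Fin g) : tt g e ≠ 0 :=
  (map_ne_zero_iff _ (IsFractionRing.injective (MvPolynomial (Fin (g+1)) ℚ) (Ft g))).mpr
    (X_ne_zero _)

lemma sub_one_ne_zero' (g n : ℕ) (p : MvPolynomial (Fin n) (Ft g))
    (hp : eval (fun _ => (0:Ft g)) p = 0) : p - 1 ≠ 0 := by
  intro h
  have h2 := congrArg (eval (fun _ => (0:Ft g))) h
  rw [map_sub, map_one, hp, map_zero] at h2
  simp at h2

lemma iotaX_sub_one_ne_zero (g n : ℕ) (a : Fin n) : ι g n (X a) - 1 ≠ 0 := by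
  rw [show (1 : Kt g n) = ι g n 1 from (map_one _).symm, ← map_sub]
  exact (map_ne_zero_iff _ (iota_inj g n)).mpr
    (sub_one_ne_zero' g n (X a) (by simp))

/-- The cleared-denominator numerator polynomial. -/
def Ppoly (g n : ℕ) (d : ℤ) (k M : ℕ) : MvPolynomial (Fin n) (Ft g) :=
  (∑ a : Fin n, (X a - 1) ^ (d + (k:ℤ)).toNat * ∏ a' ∈ Finset.univ.erase a, (X a' - 1) ^ k) *
  (∏ e : Fin g, ∏ a : Fin n, ∏ b : Fin n, (X a * C (qq g) - X b * C (tt g e))) *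
  (∏ a : Fin n, X a) ^ M

/-- The denominator polynomial. -/
def Qpoly (g n : ℕ) (k : ℕ) : MvPolynomial (Fin n) (Ft g) :=
  (∏ a : Fin n, (X a - 1)) ^ k *
  ∏ e : Fin g, ∏ a : Fin n, ∏ b : Fin n, (X b * C (tt g e))

lemma key (g n : ℕ) (d : ℤ) (M : ℕ) (N : MvPolynomial (Fin n) (Ft g))
    (hN : ι g n N = kappaT g n d * (∏ a : Fin n, ww g n a) ^ M) :
    N * Qpoly g n d.natAbs = Ppoly g n d d.natAbs M := by
  set k := d.natAbs with hk
  have hdk : (0:ℤ) ≤ d + (k:ℤ) := by omega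
  apply iota_inj g n
  rw [map_mul, hN]
  unfold kappaT Ppoly Qpoly
  simp only [map_mul, map_pow, map_prod, map_sum, map_sub, map_one, ww, cc]
  have hA : (∑ a : Fin n, (ι g n (X a) - 1) ^ d) * (∏ a : Fin n, (ι g n (X a) - 1)) ^ k
      = ∑ a : Fin n, (ι g n (X a) - 1) ^ (d + (k:ℤ)).toNat *
          ∏ a' ∈ Finset.univ.erase a, (ι g n (X a') - 1) ^ k := by
    rw [Finset.sum_mul]
    refine Finset.sum_congr rfl fun a _ => ?_
    rw [← Finset.prod_pow, ← Finset.mul_prod_erase _ _ (Finset.mem_univ a), ← mul_assoc]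
    congr 1
    rw [← zpow_natCast (ι g n (X a) - 1) ((d + (k:ℤ)).toNat), Int.toNat_of_nonneg hdk,
      zpow_add₀ (iotaX_sub_one_ne_zero g n a), zpow_natCast]
  have hB : (∏ e : Fin g, ∏ a : Fin n, ∏ b : Fin n,
        (ι g n (X a) * ι g n (C (qq g)) / (ι g n (X b) * ι g n (C (tt g e))) - 1)) *
      (∏ e : Fin g, ∏ a : Fin n, ∏ b : Fin n, (ι g n (X b) * ι g n (C (tt g e))))
      = ∏ e : Fin g, ∏ a : Fin n, ∏ b : Fin n,
          (ι g n (X a) * ι g n (C (qq g)) - ι g n (X b) * ι g n (C (tt g e))) := by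
    rw [← Finset.prod_mul_distrib]
    refine Finset.prod_congr rfl fun e _ => ?_
    rw [← Finset.prod_mul_distrib]
    refine Finset.prod_congr rfl fun a _ => ?_
    rw [← Finset.prod_mul_distrib]
    refine Finset.prod_congr rfl fun b _ => ?_
    have hy : ι g n (X b) * ι g n (C (tt g e)) ≠ 0 :=
      mul_ne_zero ((map_ne_zero_iff _ (iota_inj g n)).mpr (X_ne_zero _))
        ((map_ne_zero_iff _ (iota_inj g n)).mpr (by
          simpa using tt_ne_zero g e))
    rw [sub_mul, one_mul, div_mul_cancel₀ _ hy]
  rw [← hA, ← hB]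
  ring

lemma aeval_Q_ne_zero (g n : ℕ) (k : ℕ) (f : Fin n → MvPolynomial (Fin n) (Ft g))
    (hf0 : ∀ v, f v ≠ 0) (hfe : ∀ v, eval (fun _ => (0:Ft g)) (f v) = 0) :
    aeval f (Qpoly g n k) ≠ 0 := by
  unfold Qpoly
  rw [map_mul, map_pow, map_prod]
  apply mul_ne_zero
  · apply pow_ne_zero
    rw [Finset.prod_ne_zero_iff]
    intro a _
    rw [map_sub, map_one, aeval_X]
    exact fun h => sub_one_ne_zero' g n (f a) (hfe a) h
  · rw [map_prod, Finset.prod_ne_zero_iff]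
    intro e _
    rw [map_prod, Finset.prod_ne_zero_iff]
    intro a _
    rw [map_prod, Finset.prod_ne_zero_iff]
    intro b _
    rw [map_mul, aeval_X, aeval_C]
    exact mul_ne_zero (hf0 b) (by
      rw [MvPolynomial.algebraMap_eq]
      simpa using tt_ne_zero g e)

lemma aeval_N_eq_zero (g n : ℕ) (d : ℤ) (M : ℕ) (N : MvPolynomial (Fin n) (Ft g))
    (hN : ι g n N = kappaT g n d * (∏ a : Fin n, ww g n a) ^ M)
    (f : Fin n → MvPolynomial (Fin n) (Ft g))
    (hf0 : ∀ v, f v ≠ 0)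
    (hfe : ∀ v, eval (fun _ => (0:Ft g)) (f v) = 0)
    (hP : aeval f (∏ e : Fin g, ∏ a : Fin n, ∏ b : Fin n,
        (X a * C (qq g) - X b * C (tt g e))) = 0) :
    aeval f N = 0 := by
  have hkey := key g n d M N hN
  have h1 : aeval f N * aeval f (Qpoly g n d.natAbs) = 0 := by
    rw [← map_mul, hkey]
    unfold Ppoly
    rw [map_mul, map_mul, hP, mul_zero, zero_mul]
  rcases mul_eq_zero.mp h1 with h | h
  · exact h
  · exact absurd h (aeval_Q_ne_zero g n d.natAbs f hf0 hfe)

theorem kappaT_satisfies_mult_wheel (g n : ℕ) (hg : 1 ≤ g) (hn : 1 ≤ n) (d : ℤ)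
    (M : ℕ) (N : MvPolynomial (Fin n) (Ft g))
    (hN : ι g n N = kappaT g n d * (∏ a : Fin n, ww g n a) ^ M) :
    MultWheel g n N := by
  intro e a b c hab hbc hac
  constructor
  · apply aeval_N_eq_zero g n d M N hN
    · intro v
      split_ifs
      · exact mul_ne_zero (X_ne_zero _) (by simpa using tt_ne_zero g e)
      · exact mul_ne_zero (X_ne_zero _) (by simpa using qq_ne_zero g)
      · exact X_ne_zero _
    · intro v
      split_ifs <;> simp
    · rw [map_prod]
      apply Finset.prod_eq_zero (Finset.mem_univ e)
      rw [map_prod]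
      apply Finset.prod_eq_zero (Finset.mem_univ b)
      rw [map_prod]
      apply Finset.prod_eq_zero (Finset.mem_univ c)
      rw [map_sub, map_mul, map_mul, aeval_X, aeval_X, aeval_C, aeval_C]
      rw [if_pos rfl, if_neg (Ne.symm hbc), if_pos rfl, MvPolynomial.algebraMap_eq]
      ring
  · apply aeval_N_eq_zero g n d M N hN
    · intro v
      split_ifs
      · exact mul_ne_zero (X_ne_zero _)
          (by simpa using div_ne_zero (qq_ne_zero g) (tt_ne_zero g e))
      · exact mul_ne_zero (X_ne_zero _) (by simpa using qq_ne_zero g)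
      · exact X_ne_zero _
    · intro v
      split_ifs <;> simp
    · rw [map_prod]
      apply Finset.prod_eq_zero (Finset.mem_univ e)
      rw [map_prod]
      apply Finset.prod_eq_zero (Finset.mem_univ a)
      rw [map_prod]
      apply Finset.prod_eq_zero (Finset.mem_univ b)
      rw [map_sub, map_mul, map_mul, aeval_X, aeval_X, aeval_C, aeval_C]
      rw [if_neg hab, if_neg hac, if_pos rfl, MvPolynomial.algebraMap_eq]
      rw [mul_assoc, ← C_mul, div_mul_cancel₀ _ (tt_ne_zero g e)]
      ring
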